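/- Renaming the indeterminate x preserves and reflects isomorphism: for any i ≥ 1 and closed terms u, v over Σ \ {xᵢ}, one has u[xᵢ/x] ≅ v[xᵢ/x] if and only if u ≅ v. -/

import Mathlib

/-- First-order terms over symbols `S` with arity `ar` and variables `V`. -/
inductive Tm (S : Type) (ar : S → ℕ) (V : Type) : Type
  | var : V → Tm S ar V
  | app : (f : S) → (Fin (ar f) → Tm S ar V) → Tm S ar V

namespace Tm
variable {S : Type} {ar : S → ℕ} {V W : Type}

def mapVar (g : V → W) : Tm S ar V → Tm S ar W
  | var v => var (g v)
  | app f ts => app f (fun i => (ts i).mapVar g)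

def bind : Tm S ar V → (V → Tm S ar W) → Tm S ar W
  | var v, g => g v
  | app f ts, g => app f (fun i => (ts i).bind g)

/-- All variables of a term belong to a given set. -/
def VarsIn : Tm S ar V → Set V → Prop
  | var v, A => v ∈ A
  | app _ ts, A => ∀ i, VarsIn (ts i) A

/-- The term contains at least one variable. -/
def HasVar : Tm S ar V → Prop
  | var _ => True
  | app _ ts => ∃ i, HasVar (ts i)

end Tm

/-- The combined signature: operation symbols of the two theories (`op`),
generator constants `y₁,…,yₙ` (`gen`), and indeterminate constants `x = ind 0`,
`xᵢ = ind i` (`ind`). -/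
inductive CSym (F : Bool → Type) (n : ℕ) : Type
  | op : (b : Bool) → F b → CSym F n
  | gen : Fin n → CSym F n
  | ind : ℕ → CSym F n

namespace CSym
variable {F : Bool → Type} {n : ℕ}

def arity (arF : ∀ b, F b → ℕ) : CSym F n → ℕ
  | op b f => arF b f
  | gen _ => 0
  | ind _ => 0

/-- Which of the four component signatures a symbol belongs to:
`0 = Σ₁`, `1 = Σ₂`, `2 = Σ₃`, `3 = Σ₄`. -/
def sig : CSym F n → Fin 4
  | op false _ => 0
  | op true _ => 1
  | gen _ => 2
  | ind _ => 3

end CSym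
section Setup

variable (F : Bool → Type) (arF : ∀ b, F b → ℕ) (n : ℕ)

/-- Closed terms over the combined signature `Σ = Σ₁ ∪ Σ₂ ∪ Σ₃ ∪ Σ₄`. -/
abbrev CT := Tm (CSym F n) (CSym.arity arF) Empty

/-- The root symbol of a closed term. -/
def rootSym : CT F arF n → CSym F n
  | .var v => v.elim
  | .app f _ => f

/-- All symbols of the closed term satisfy the predicate `P`. -/
def InSig (P : CSym F n → Prop) : CT F arF n → Prop
  | .var v => v.elim
  | .app f ts => P f ∧ ∀ i, InSig P (ts i)

/-- A closed term is pure if all of its symbols belong to a single one of the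
four component signatures. -/
def IsPure (t : CT F arF n) : Prop := ∃ k : Fin 4, InSig F arF n (fun s => s.sig = k) t

/-- The rank of a closed term: `0` if pure, and otherwise `1` plus the maximal
rank of its alien subterms. -/
def rank : CT F arF n → ℕ
  | .var v => v.elim
  | .app f ts =>
      Finset.univ.sup fun i =>
        rank (ts i) + (if (rootSym F arF n (ts i)).sig = f.sig then 0 else 1)

/-- The maximal subterms of `t` whose root is outside signature `k`. -/
def aliensUnder (k : Fin 4) : CT F arF n → Set (CT F arF n)
  | .var v => v.elim
  | .app f ts =>
      if f.sig = k then ⋃ i, aliensUnder k (ts i) else {Tm.app f ts}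

/-- The alien subterms of a closed term (relative to the signature of its root). -/
def aliensSet : CT F arF n → Set (CT F arF n)
  | .var v => v.elim
  | .app f ts => ⋃ i, aliensUnder F arF n f.sig (ts i)

/-- All alien subterms at arbitrary depth. -/
def allAliensSet : CT F arF n → Set (CT F arF n)
  | .var v => v.elim
  | .app f ts =>
      ⋃ i, (if (rootSym F arF n (ts i)).sig = f.sig then (∅ : Set _) else {ts i}) ∪
        allAliensSet (ts i)

/-- View a closed combined term through the layer of theory `b`: keep the
top part built from `Σ_b`-symbols and regard the maximal non-`Σ_b`-rooted
subterms as opaque constants. -/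
def layerize (b : Bool) : CT F arF n → Tm (F b) (arF b) (CT F arF n)
  | .app (.op b' f) ts =>
      if h : b' = b then h ▸ (Tm.app f (fun i => layerize b' (ts i)))
      else Tm.var (Tm.app (.op b' f) ts)
  | t => Tm.var t

end Setup
section Setup2

variable (F : Bool → Type) (arF : ∀ b, F b → ℕ) (n : ℕ)
variable (Ax : ∀ b, Set (Tm (F b) (arF b) ℕ × Tm (F b) (arF b) ℕ))

mutual
/-- The isomorphism relation `≅` on closed combined terms, defined together
with the layer congruences: two terms are isomorphic iff their roots lie in the
same component signature and their alien abstractions are congruent modulo the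
corresponding theory (for the constant signatures `Σ₃, Σ₄` this is syntactic
equality). -/
inductive Iso : CT F arF n → CT F arF n → Prop where
  | opEq (b : Bool) (u v : CT F arF n) :
      (∃ g : F b, rootSym F arF n u = .op b g) →
      (∃ g : F b, rootSym F arF n v = .op b g) →
      LEq b (layerize F arF n b u) (layerize F arF n b v) → Iso u v
  | constEq (t : CT F arF n) :
      ((rootSym F arF n t).sig = 2 ∨ (rootSym F arF n t).sig = 3) → Iso t t

/-- The congruence `≈_b` on `Σ_b`-terms whose constants are closed combined
terms (representing their `≅`-classes): generated by the substitution instances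
of the axioms of `𝕋_b` together with the identification of `≅`-related
constants. -/
inductive LEq : (b : Bool) →
    Tm (F b) (arF b) (CT F arF n) → Tm (F b) (arF b) (CT F arF n) → Prop where
  | refl (b) (t) : LEq b t t
  | symm {b s t} : LEq b s t → LEq b t s
  | trans {b s t u} : LEq b s t → LEq b t u → LEq b s u
  | congr (b) (g : F b) (ts us : Fin (arF b g) → Tm (F b) (arF b) (CT F arF n)) :
      (∀ i, LEq b (ts i) (us i)) → LEq b (.app g ts) (.app g us)
  | varRel (b) (s t : CT F arF n) : Iso s t → LEq b (.var s) (.var t)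
  | ax (b) (u v : Tm (F b) (arF b) ℕ) : (u, v) ∈ Ax b →
      ∀ σ : ℕ → Tm (F b) (arF b) (CT F arF n), LEq b (u.bind σ) (v.bind σ)
end

end Setup2
section Setup3

variable (F : Bool → Type) (arF : ∀ b, F b → ℕ) (n : ℕ)
variable (Ax : ∀ b, Set (Tm (F b) (arF b) ℕ × Tm (F b) (arF b) ℕ))

/-- The combined algebra `𝒜 = Term^c(Σ)/≅`. -/
abbrev Alg := Quot (Iso F arF n Ax)

/-- Provable equality in the theory `𝕋_b` on terms with variables (equivalently
the smallest `Σ_b`-congruence containing all substitution instances of the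
axioms of `𝕋_b`); with `V := Alg` this is the congruence `≈_b` on
`Term^c(Σ_b, Term^c(Σ)/≅)`. -/
inductive AxCong (b : Bool) {V : Type} : Tm (F b) (arF b) V → Tm (F b) (arF b) V → Prop where
  | refl (t) : AxCong b t t
  | symm {s t} : AxCong b s t → AxCong b t s
  | trans {s t u} : AxCong b s t → AxCong b t u → AxCong b s u
  | congr (g : F b) (ts us : Fin (arF b g) → Tm (F b) (arF b) V) :
      (∀ i, AxCong b (ts i) (us i)) → AxCong b (.app g ts) (.app g us)
  | ax (u v : Tm (F b) (arF b) ℕ) : (u, v) ∈ Ax b →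
      ∀ σ : ℕ → Tm (F b) (arF b) V, AxCong b (u.bind σ) (v.bind σ)

/-- Abstraction of alien subterms: `[t]ᵇ_≅ ∈ Term^c(Σ_b, Term^c(Σ)/≅)`. -/
def absQ (b : Bool) (t : CT F arF n) : Tm (F b) (arF b) (Alg F arF n Ax) :=
  (layerize F arF n b t).mapVar (Quot.mk _)

attribute [local instance] Classical.propDecidable

/-- The interpretation `t^𝒜` of a closed combined term in the combined algebra:
a term collapses to (the class of) an alien subterm whose class its alien
abstraction is `≈_b`-congruent to, and is interpreted by its own class
otherwise. -/
noncomputable def interp : CT F arF n → Alg F arF n Ax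
  | .app (.op b g) ts =>
      let t' : CT F arF n := .app (.op b g) (fun i => (interp (ts i)).out)
      if h : ∃ u, u ∈ aliensSet F arF n t' ∧
          AxCong F arF Ax b (absQ F arF n Ax b t') (.var (Quot.mk _ u))
      then Quot.mk _ h.choose
      else Quot.mk _ t'
  | t => Quot.mk _ t

end Setup3
section Setup4

variable (F : Bool → Type) (arF : ∀ b, F b → ℕ) (n : ℕ)
variable (Ax : ∀ b, Set (Tm (F b) (arF b) ℕ × Tm (F b) (arF b) ℕ))

/-- Substitution of a closed term `w` for the indeterminate constant `x_j` in a
closed combined term. -/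
def substInd (j : ℕ) (w : CT F arF n) : CT F arF n → CT F arF n
  | .var v => v.elim
  | .app (.ind j') ts => if j' = j then w else .app (.ind j') ts
  | .app f ts => .app f (fun i => substInd j w (ts i))

/-- The indeterminate constant `x_i` as a closed term (`x = xTm 0`). -/
def xTm (i : ℕ) : CT F arF n := .app (.ind i) Fin.elim0

/-- Replace every indeterminate constant occurring in a term by `x`. -/
def indToX : CT F arF n → CT F arF n
  | .var v => v.elim
  | .app (.ind _) _ => xTm F arF n 0
  | .app f ts => .app f (fun i => indToX (ts i))

/-- Embedding of `Σ_b`-terms into combined terms. -/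
def embedOp (b : Bool) {V : Type} : Tm (F b) (arF b) V → Tm (CSym F n) (CSym.arity arF) V
  | .var v => .var v
  | .app g ts => .app (.op b g) (fun i => embedOp b (ts i))

/-- Provable equality for the (combination of the) theories `𝕋_b` (`b ∈ B`) on
closed terms over the sub-signature of symbols satisfying `P`: the smallest
congruence on that set of closed terms containing all substitution instances
(by closed terms over the sub-signature) of the axioms. -/
inductive PE (B : Set Bool) (P : CSym F n → Prop) : CT F arF n → CT F arF n → Prop where
  | refl (t) : InSig F arF n P t → PE B P t t
  | symm {s t} : PE B P s t → PE B P t s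
  | trans {s t u} : PE B P s t → PE B P t u → PE B P s u
  | congr (f : CSym F n) (ts us : Fin (CSym.arity arF f) → CT F arF n) : P f →
      (∀ i, PE B P (ts i) (us i)) → PE B P (.app f ts) (.app f us)
  | ax (b : Bool) (hb : b ∈ B) (u v : Tm (F b) (arF b) ℕ) (h : (u, v) ∈ Ax b)
      (σ : ℕ → CT F arF n) : (∀ m, InSig F arF n P (σ m)) →
      PE B P ((embedOp F arF n b u).bind σ) ((embedOp F arF n b v).bind σ)

/-- The sub-signature consisting of the operations of the theories in `B`, all
generator constants `y₁,…,yₙ`, and the indeterminates `x_j` with `j ∈ J`. -/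
def SigP (B : Set Bool) (J : Set ℕ) : CSym F n → Prop
  | .op b _ => b ∈ B
  | .gen _ => True
  | .ind j => j ∈ J

/-- The (combination of the) theories in `B` is non-trivial: it does not prove
the equation `x = y` for distinct variables (equivalently, it does not identify
two distinct indeterminate constants). -/
def Nontriv (B : Set Bool) : Prop :=
  ¬ PE F arF n Ax B (SigP F n B Set.univ) (xTm F arF n 1) (xTm F arF n 2)

/-- Membership of (the class of) `t` in the logical isotropy group of the free
model on `n` generators of the combination of the theories in `B`: `t` is a
closed term over the signature extended by the constant `x` that is invertible
under substitution into `x` and commutes generically with every operation. -/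
def GIso (B : Set Bool) (t : CT F arF n) : Prop :=
  InSig F arF n (SigP F n B {0}) t ∧
  (∃ tinv, InSig F arF n (SigP F n B {0}) tinv ∧
    PE F arF n Ax B (SigP F n B {0}) (substInd F arF n 0 tinv t) (xTm F arF n 0) ∧
    PE F arF n Ax B (SigP F n B {0}) (substInd F arF n 0 t tinv) (xTm F arF n 0)) ∧
  ∀ b, b ∈ B → ∀ g : F b,
    PE F arF n Ax B (SigP F n B {j | 1 ≤ j ∧ j ≤ arF b g})
      (substInd F arF n 0 (.app (.op b g) (fun i => xTm F arF n (i.val + 1))) t)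
      (.app (.op b g) (fun i => substInd F arF n 0 (xTm F arF n (i.val + 1)) t))

/-- `g` is a projection in `𝕋_b`. -/
def IsProj (b : Bool) (g : F b) : Prop :=
  ∃ i : Fin (arF b g),
    AxCong F arF Ax b (V := ℕ) (.app g (fun j => .var j.val)) (.var i.val)

/-- `g` is constant in `𝕋_b`: `𝕋_b` proves `g(y₁,…,y_m) = s` for pairwise
distinct variables none of which occurs in `s`. -/
def IsConst (b : Bool) (g : F b) : Prop :=
  ∃ s : Tm (F b) (arF b) ℕ, s.VarsIn {m | arF b g ≤ m} ∧
    AxCong F arF Ax b (V := ℕ) (.app g (fun j => .var j.val)) s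

end Setup4
section Models

variable (F : Bool → Type) (arF : ∀ b, F b → ℕ) (n : ℕ)
variable (Ax : ∀ b, Set (Tm (F b) (arF b) ℕ × Tm (F b) (arF b) ℕ))

/-- Evaluation of a `Σ_b`-term in a set equipped with operations. -/
def evalTm {α : Type} (ops : ∀ b (g : F b), (Fin (arF b g) → α) → α)
    (b : Bool) {V : Type} (ρ : V → α) : Tm (F b) (arF b) V → α
  | .var v => ρ v
  | .app g ts => ops b g (fun i => evalTm ops b ρ (ts i))

/-- A (set-based) model of the combined theory `𝕋₁ + 𝕋₂`. -/
structure TModel where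
  carrier : Type
  ops : ∀ b (g : F b), (Fin (arF b g) → carrier) → carrier
  sat : ∀ b u v, (u, v) ∈ Ax b → ∀ ρ : ℕ → carrier,
      evalTm F arF ops b ρ u = evalTm F arF ops b ρ v

/-- Homomorphisms of models. -/
@[ext]
structure TModelHom (M N : TModel F arF Ax) where
  toFun : M.carrier → N.carrier
  map_ops : ∀ b (g : F b) (args : Fin (arF b g) → M.carrier),
      toFun (M.ops b g args) = N.ops b g (fun i => toFun (args i))

/-- The identity homomorphism. -/
def TModelHom.id (M : TModel F arF Ax) : TModelHom F arF Ax M M :=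
  ⟨fun a => a, fun _ _ _ => rfl⟩

/-- Composition of homomorphisms. -/
def TModelHom.comp {M M' M'' : TModel F arF Ax} (h' : TModelHom F arF Ax M' M'')
    (h : TModelHom F arF Ax M M') : TModelHom F arF Ax M M'' :=
  ⟨fun a => h'.toFun (h.toFun a), fun b g args => by
    simp [h.map_ops, h'.map_ops]⟩

/-- `M` together with the `n` elements `gens` is a free model on `n`
generators: the universal property. -/
def IsFreeOn (M : TModel F arF Ax) (gens : Fin n → M.carrier) : Prop :=
  ∀ (N : TModel F arF Ax) (a : Fin n → N.carrier),
    ∃! h : TModelHom F arF Ax M N, ∀ i, h.toFun (gens i) = a i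

end Models

/-! `≅` is defined from root signatures and layer congruences, neither of which sees the names
of indeterminates, so every renaming `xⱼ ↦ x_{π j}` of indeterminates preserves it; an injective
renaming has a left inverse and hence also reflects it. On terms not containing `xᵢ`,
substituting `xᵢ` for `x` is the renaming along the transposition `(0 i)`. -/

theorem Tm.bind_mapVar {S : Type} {ar : S → ℕ} {U V W : Type} (g : V → W)
    (σ : U → Tm S ar V) : ∀ u : Tm S ar U,
    (u.bind σ).mapVar g = u.bind (fun m => (σ m).mapVar g)
  | .var _ => rfl
  | .app f ts => congrArg (Tm.app f) (funext fun i => bind_mapVar g σ (ts i))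

section Rename
variable {F : Bool → Type} {arF : ∀ b, F b → ℕ} {n : ℕ}
variable {Ax : ∀ b, Set (Tm (F b) (arF b) ℕ × Tm (F b) (arF b) ℕ)}

def renInd (π : ℕ → ℕ) : CT F arF n → CT F arF n
  | .var v => v.elim
  | .app (.op b g) ts => .app (.op b g) (fun i => renInd π (ts i))
  | .app (.gen k) ts => .app (.gen k) (fun i => renInd π (ts i))
  | .app (.ind j) ts => .app (.ind (π j)) ts

def CSym.renInd (π : ℕ → ℕ) : CSym F n → CSym F n
  | .op b f => .op b f
  | .gen k => .gen k
  | .ind j => .ind (π j)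

theorem CSym.sig_renInd (π : ℕ → ℕ) (s : CSym F n) : (s.renInd π).sig = s.sig := by
  cases s <;> rfl

theorem rootSym_renInd (π : ℕ → ℕ) (t : CT F arF n) :
    rootSym F arF n (renInd π t) = (rootSym F arF n t).renInd π := by
  cases t with
  | var v => exact v.elim
  | app f ts => cases f <;> rfl

theorem layerize_renInd (π : ℕ → ℕ) (b : Bool) : ∀ t : CT F arF n,
    layerize F arF n b (renInd π t) = (layerize F arF n b t).mapVar (renInd π)
  | .var v => v.elim
  | .app (.op b' f) ts => by
      by_cases h : b' = b
      · subst h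
        simp only [renInd, layerize]
        exact congrArg _ (funext fun i => layerize_renInd π b' (ts i))
      · simp only [renInd, layerize, dif_neg h, Tm.mapVar]
  | .app (.gen _) _ => rfl
  | .app (.ind _) _ => rfl

theorem renInd_renInd (π π' : ℕ → ℕ) : ∀ t : CT F arF n,
    renInd π (renInd π' t) = renInd (π ∘ π') t
  | .var v => v.elim
  | .app (.op _ _) ts => congrArg _ (funext fun i => renInd_renInd π π' (ts i))
  | .app (.gen _) ts => congrArg _ (funext fun i => renInd_renInd π π' (ts i))
  | .app (.ind _) _ => rfl

theorem renInd_id : ∀ t : CT F arF n, renInd id t = t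
  | .var v => v.elim
  | .app (.op _ _) ts => congrArg _ (funext fun i => renInd_id (ts i))
  | .app (.gen _) ts => congrArg _ (funext fun i => renInd_id (ts i))
  | .app (.ind _) _ => rfl

theorem iso_renInd (π : ℕ → ℕ) {s t : CT F arF n} (h : Iso F arF n Ax s t) :
    Iso F arF n Ax (renInd π s) (renInd π t) := by
  refine Iso.rec (motive_1 := fun s t _ => Iso F arF n Ax (renInd π s) (renInd π t))
    (motive_2 := fun b p q _ =>
      LEq F arF n Ax b (p.mapVar (renInd π)) (q.mapVar (renInd π)))
    ?opEq ?constEq ?refl ?symm ?trans ?congr ?varRel ?ax h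
  case opEq =>
    rintro b u v ⟨g, hg⟩ ⟨g', hg'⟩ _ ih
    refine Iso.opEq b _ _ ⟨g, ?_⟩ ⟨g', ?_⟩ ?_
    · rw [rootSym_renInd, hg]; rfl
    · rw [rootSym_renInd, hg']; rfl
    · rwa [layerize_renInd, layerize_renInd]
  case constEq =>
    intro t ht
    exact Iso.constEq _ (by rwa [rootSym_renInd, CSym.sig_renInd])
  case refl => exact fun b t => LEq.refl b _
  case symm => exact fun _ ih => LEq.symm ih
  case trans => exact fun _ _ ih₁ ih₂ => LEq.trans ih₁ ih₂
  case congr => exact fun b g _ _ _ ih => LEq.congr b g _ _ ih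
  case varRel => exact fun b _ _ _ ih => LEq.varRel b _ _ ih
  case ax =>
    intro b u v hmem σ
    rw [Tm.bind_mapVar, Tm.bind_mapVar]
    exact LEq.ax b u v hmem _

theorem iso_renInd_iff {π : ℕ → ℕ} (hπ : Function.Injective π) {s t : CT F arF n} :
    Iso F arF n Ax (renInd π s) (renInd π t) ↔ Iso F arF n Ax s t := by
  refine ⟨fun h => ?_, iso_renInd π⟩
  simpa only [renInd_renInd, Function.invFun_comp hπ, renInd_id] using
    iso_renInd (Function.invFun π) h

theorem substInd_xTm_eq_renInd_swap (j i : ℕ) :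
    ∀ u : CT F arF n, InSig F arF n (fun s => s ≠ .ind i) u →
    substInd F arF n j (xTm F arF n i) u = renInd (Equiv.swap j i) u
  | .var v, _ => v.elim
  | .app (.op _ _) ts, hu =>
      congrArg _ (funext fun k => substInd_xTm_eq_renInd_swap j i (ts k) (hu.2 k))
  | .app (.gen _) ts, hu =>
      congrArg _ (funext fun k => substInd_xTm_eq_renInd_swap j i (ts k) (hu.2 k))
  | .app (.ind j') ts, hu => by
      by_cases hj : j' = j
      · subst hj
        rw [substInd, if_pos rfl, renInd, Equiv.swap_apply_left, xTm,
          show ts = Fin.elim0 from funext (Fin.elim0 ·)]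
      · have hji : j' ≠ i := fun e => hu.1 (congrArg CSym.ind e)
        rw [substInd, if_neg hj, renInd, Equiv.swap_apply_of_ne_of_ne hj hji]

end Rename

section Statement
variable (F : Bool → Type) (arF : ∀ b, F b → ℕ) (n : ℕ)
variable (Ax : ∀ b, Set (Tm (F b) (arF b) ℕ × Tm (F b) (arF b) ℕ))

/-- Renaming the indeterminate `x` to `xᵢ` preserves and reflects the
isomorphism relation `≅` on closed terms not containing `xᵢ`. -/
theorem iso_rename_indeterminate (i : ℕ) (hi : 1 ≤ i) (u v : CT F arF n)
    (hu : InSig F arF n (fun s => s ≠ .ind i) u)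
    (hv : InSig F arF n (fun s => s ≠ .ind i) v) :
    Iso F arF n Ax (substInd F arF n 0 (xTm F arF n i) u)
        (substInd F arF n 0 (xTm F arF n i) v) ↔
      Iso F arF n Ax u v := by
  rw [substInd_xTm_eq_renInd_swap 0 i u hu, substInd_xTm_eq_renInd_swap 0 i v hv]
  exact iso_renInd_iff (Equiv.injective _)
end Statement
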